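/- For every graph G without isolated vertices and every vertex v such that G − v has no isolated vertices, γ_g^t(G) ≤ γ_g^t(G − v) + 4. -/
import Mathlib


open Finset

open scoped Classical

variable {V : Type*} [Fintype V]

/-- The set of neighbors of `v` (the vertices that `v` totally dominates). -/
noncomputable def nbr (G : SimpleGraph V) (v : V) : Finset V :=
  Finset.univ.filter (G.Adj v)

/-- The legal moves, given that the vertices of `D` are already totally dominated:
a vertex is playable iff it totally dominates at least one vertex outside `D`. -/
noncomputable def movesF (G : SimpleGraph V) (D : Finset V) : Finset V :=
  Finset.univ.filter fun v => ¬ nbr G v ⊆ D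

lemma movesF_card (G : SimpleGraph V) (D : Finset V) {v : V} (hv : v ∈ movesF G D) :
    ((univ : Finset V) \ (D ∪ nbr G v)).card < ((univ : Finset V) \ D).card := by
  simp only [movesF, mem_filter] at hv
  obtain ⟨u, hu, hu2⟩ := Finset.not_subset.mp hv.2
  apply Finset.card_lt_card
  constructor
  · exact Finset.sdiff_subset_sdiff le_rfl Finset.subset_union_left
  · intro hsub
    have h1 : u ∈ (univ : Finset V) \ D := by simp [hu2]
    have h2 := hsub h1
    simp only [mem_sdiff, mem_univ, true_and, Finset.mem_union] at h2
    exact h2 (Or.inr hu)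

/-- Optimal number of moves in the total domination game on `G` with the vertices of `D`
already totally dominated; `turn = true` means Dominator (the minimizer) moves next,
`turn = false` means Staller (the maximizer) moves next.  The game ends when no legal
move remains (for graphs without isolated vertices this means every vertex is totally
dominated). -/
noncomputable def gtVal (G : SimpleGraph V) (turn : Bool) (D : Finset V) : ℕ :=
  if h : (movesF G D).Nonempty then
    if turn then
      1 + ((movesF G D).attach.inf' (by simpa using h)
        fun v => gtVal G false (D ∪ nbr G v.1))
    else
      1 + ((movesF G D).attach.sup' (by simpa using h)
        fun v => gtVal G true (D ∪ nbr G v.1))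
  else 0
termination_by ((univ : Finset V) \ D).card
decreasing_by
  · exact movesF_card G D v.2
  · exact movesF_card G D v.2

/-- The game total domination number `γ_g^t(G|D)` (Dominator-start, `D` predominated). -/
noncomputable def gtD (G : SimpleGraph V) (D : Finset V := ∅) : ℕ := gtVal G true D

/-- The Staller-start game total domination number `γ_g^t'(G|D)`. -/
noncomputable def gtS (G : SimpleGraph V) (D : Finset V := ∅) : ℕ := gtVal G false D

/-- `G` has no isolated vertices. -/
def NoIsolated (G : SimpleGraph V) : Prop := ∀ v : V, ∃ w, G.Adj v w

attribute [-instance] Subtype.instDecidableEq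

section AuxGen
variable {α : Type*} {s : Finset α}

lemma inf'_attach_le (f : α → ℕ) {a : α} (ha : a ∈ s) (h : s.attach.Nonempty) :
    (s.attach.inf' h fun x => f x.1) ≤ f a :=
  Finset.inf'_le (fun x => f x.1) (Finset.mem_attach _ ⟨a, ha⟩)

lemma le_sup'_attach (f : α → ℕ) {a : α} (ha : a ∈ s) (h : s.attach.Nonempty) :
    f a ≤ s.attach.sup' h fun x => f x.1 :=
  Finset.le_sup' (fun x => f x.1) (Finset.mem_attach _ ⟨a, ha⟩)

lemma inf'_attach_exists (f : α → ℕ) (h : s.attach.Nonempty) :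
    ∃ a ∈ s, (s.attach.inf' h fun x => f x.1) = f a := by
  obtain ⟨b, -, hb⟩ := Finset.exists_mem_eq_inf' h fun x => f x.1
  exact ⟨b.1, b.2, hb⟩

lemma sup'_attach_exists (f : α → ℕ) (h : s.attach.Nonempty) :
    ∃ a ∈ s, (s.attach.sup' h fun x => f x.1) = f a := by
  obtain ⟨b, -, hb⟩ := Finset.exists_mem_eq_sup' h fun x => f x.1
  exact ⟨b.1, b.2, hb⟩

end AuxGen
section Aux

variable {G : SimpleGraph V} {D : Finset V}

lemma mem_nbr {a b : V} : b ∈ nbr G a ↔ G.Adj a b := by simp [nbr]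

lemma mem_movesF {a : V} : a ∈ movesF G D ↔ ¬ nbr G a ⊆ D := by simp [movesF]

lemma gtVal_of_empty (h : ¬ (movesF G D).Nonempty) (t : Bool) : gtVal G t D = 0 := by
  rw [gtVal, dif_neg h]

lemma gtVal_true_eq (h : (movesF G D).Nonempty) :
    gtVal G true D = 1 + ((movesF G D).attach.inf' (by simpa using h)
      fun a => gtVal G false (D ∪ nbr G a.1)) := by
  rw [gtVal, dif_pos h]; rfl

lemma gtVal_false_eq (h : (movesF G D).Nonempty) :
    gtVal G false D = 1 + ((movesF G D).attach.sup' (by simpa using h)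
      fun a => gtVal G true (D ∪ nbr G a.1)) := by
  rw [gtVal, dif_pos h]; rfl

lemma gtVal_true_le {a : V} (ha : a ∈ movesF G D) :
    gtVal G true D ≤ 1 + gtVal G false (D ∪ nbr G a) := by
  rw [gtVal_true_eq ⟨a, ha⟩]
  exact Nat.add_le_add_left (inf'_attach_le (fun b => gtVal G false (D ∪ nbr G b)) ha _) 1

lemma le_gtVal_false {a : V} (ha : a ∈ movesF G D) :
    1 + gtVal G true (D ∪ nbr G a) ≤ gtVal G false D := by
  rw [gtVal_false_eq ⟨a, ha⟩]
  exact Nat.add_le_add_left (le_sup'_attach (fun b => gtVal G true (D ∪ nbr G b)) ha _) 1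

lemma gtVal_true_exists (h : (movesF G D).Nonempty) :
    ∃ a ∈ movesF G D, gtVal G true D = 1 + gtVal G false (D ∪ nbr G a) := by
  obtain ⟨a, ha, hb⟩ := inf'_attach_exists (fun b => gtVal G false (D ∪ nbr G b))
    (s := movesF G D) (by simpa using h)
  exact ⟨a, ha, by rw [gtVal_true_eq h]; exact congrArg (1 + ·) hb⟩

lemma gtVal_false_exists (h : (movesF G D).Nonempty) :
    ∃ a ∈ movesF G D, gtVal G false D = 1 + gtVal G true (D ∪ nbr G a) := by
  obtain ⟨a, ha, hb⟩ := sup'_attach_exists (fun b => gtVal G true (D ∪ nbr G b))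
    (s := movesF G D) (by simpa using h)
  exact ⟨a, ha, by rw [gtVal_false_eq h]; exact congrArg (1 + ·) hb⟩

lemma movesF_anti {A B : Finset V} (h : A ⊆ B) : movesF G B ⊆ movesF G A := by
  intro a ha
  simp only [movesF, mem_filter, mem_univ, true_and] at ha ⊢
  exact fun hs => ha (hs.trans h)

end Aux
lemma gtVal_mono_aux (G : SimpleGraph V) : ∀ n : ℕ, ∀ A B : Finset V, A ⊆ B →
    ((univ : Finset V) \ A).card ≤ n → ∀ t : Bool,
    gtVal G t B ≤ gtVal G t A := by
  intro n
  induction n with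
  | zero =>
    intro A B hAB hcard t
    have hB : ¬ (movesF G B).Nonempty := by
      rintro ⟨a, ha⟩
      rw [mem_movesF] at ha
      refine ha fun x _ => hAB ?_
      by_contra hx
      have hx' : x ∈ (univ : Finset V) \ A := by simp [hx]
      have := Finset.card_pos.mpr ⟨x, hx'⟩
      omega
    rw [gtVal_of_empty hB]
    exact Nat.zero_le _
  | succ n ih =>
    intro A B hAB hcard t
    by_cases hB : (movesF G B).Nonempty
    · have hAne : (movesF G A).Nonempty := ⟨hB.choose, movesF_anti hAB hB.choose_spec⟩
      cases t with
      | true =>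
        obtain ⟨a, haA, hval⟩ := gtVal_true_exists hAne
        have hm : ((univ : Finset V) \ (A ∪ nbr G a)).card ≤ n := by
          have := movesF_card G A haA; omega
        by_cases haB : a ∈ movesF G B
        · have h1 : gtVal G false (B ∪ nbr G a) ≤ gtVal G false (A ∪ nbr G a) :=
            ih (A ∪ nbr G a) (B ∪ nbr G a) (Finset.union_subset_union hAB le_rfl) hm false
          have h2 := gtVal_true_le haB
          omega
        · have hsub : A ∪ nbr G a ⊆ B := by
            refine Finset.union_subset hAB ?_
            rw [mem_movesF, not_not] at haB; exact haB
          obtain ⟨b, hbB⟩ := hB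
          have h1 : gtVal G false (B ∪ nbr G b) ≤ gtVal G false (A ∪ nbr G a) :=
            ih (A ∪ nbr G a) (B ∪ nbr G b)
              (hsub.trans Finset.subset_union_left) hm false
          have h2 := gtVal_true_le hbB
          omega
      | false =>
        obtain ⟨b, hbB, hval⟩ := gtVal_false_exists hB
        have hbA := movesF_anti hAB hbB
        have hm : ((univ : Finset V) \ (A ∪ nbr G b)).card ≤ n := by
          have := movesF_card G A hbA; omega
        have h1 : gtVal G true (B ∪ nbr G b) ≤ gtVal G true (A ∪ nbr G b) :=
          ih (A ∪ nbr G b) (B ∪ nbr G b) (Finset.union_subset_union hAB le_rfl) hm true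
        have h2 := le_gtVal_false hbA
        omega
    · rw [gtVal_of_empty hB]
      exact Nat.zero_le _

lemma gtVal_mono (G : SimpleGraph V) {A B : Finset V} (hAB : A ⊆ B) (t : Bool) :
    gtVal G t B ≤ gtVal G t A :=
  gtVal_mono_aux G _ A B hAB le_rfl t

lemma gtVal_switch (G : SimpleGraph V) {A B : Finset V} (hAB : A ⊆ B) (t : Bool) :
    gtVal G t B ≤ gtVal G (!t) A + 1 := by
  by_cases hB : (movesF G B).Nonempty
  · cases t with
    | true =>
      obtain ⟨b, hbB⟩ := hB
      have h1 := gtVal_true_le hbB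
      have h2 : gtVal G false (B ∪ nbr G b) ≤ gtVal G false A :=
        gtVal_mono G (hAB.trans Finset.subset_union_left) false
      simp only [Bool.not_true]
      omega
    | false =>
      obtain ⟨b, hbB, hval⟩ := gtVal_false_exists hB
      have h2 : gtVal G true (B ∪ nbr G b) ≤ gtVal G true A :=
        gtVal_mono G (hAB.trans Finset.subset_union_left) true
      simp only [Bool.not_false]
      omega
  · rw [gtVal_of_empty hB]
    exact Nat.zero_le _
noncomputable def slack (G : SimpleGraph V) (v : V) (D : Finset V) : ℕ :=
  (if nbr G v ⊆ D then 0 else 2) + (if v ∈ D then 0 else 2)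

section SlackLemmas
variable {G : SimpleGraph V} {v : V} {D E : Finset V}

lemma slack_le_four : slack G v D ≤ 4 := by
  unfold slack; split_ifs <;> omega

lemma slack_anti (h : D ⊆ E) : slack G v E ≤ slack G v D := by
  unfold slack
  have A : (if nbr G v ⊆ E then 0 else 2) ≤ (if nbr G v ⊆ D then 0 else 2) := by
    by_cases hc : nbr G v ⊆ D
    · rw [if_pos hc, if_pos (hc.trans h)]
    · rw [if_neg hc]; split_ifs <;> omega
  have B : (if v ∈ E then 0 else 2) ≤ (if v ∈ D then 0 else 2) := by
    by_cases hc : v ∈ D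
    · rw [if_pos hc, if_pos (h hc)]
    · rw [if_neg hc]; split_ifs <;> omega
  omega

lemma slack_drop1 (hD : ¬ nbr G v ⊆ D) (hE : nbr G v ⊆ E) (hDE : D ⊆ E) :
    slack G v E + 2 ≤ slack G v D := by
  unfold slack
  rw [if_neg hD, if_pos hE]
  by_cases hv : v ∈ D
  · rw [if_pos hv, if_pos (hDE hv)]
  · rw [if_neg hv]; split_ifs <;> omega

lemma slack_drop2 (hD : v ∉ D) (hE : v ∈ E) (hDE : D ⊆ E) :
    slack G v E + 2 ≤ slack G v D := by
  unfold slack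
  rw [if_neg hD, if_pos hE]
  by_cases hn : nbr G v ⊆ D
  · rw [if_pos hn, if_pos (hn.trans hDE)]
  · rw [if_neg hn]; split_ifs <;> omega

lemma slack_pos (hD : v ∉ D) : 2 ≤ slack G v D := by
  unfold slack; rw [if_neg hD]; split_ifs <;> omega

end SlackLemmas

section MoreGt
variable {G : SimpleGraph V} {D : Finset V}

lemma movesF_empty_of_full (h : ∀ u : V, u ∈ D) : ¬ (movesF G D).Nonempty := by
  rintro ⟨a, ha⟩
  exact (mem_movesF.mp ha) fun x _ => h x

lemma gtVal_le_one (h : ∀ a ∈ movesF G D, ¬ (movesF G (D ∪ nbr G a)).Nonempty) (t : Bool) :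
    gtVal G t D ≤ 1 := by
  by_cases hD : (movesF G D).Nonempty
  · cases t with
    | true =>
      obtain ⟨a, ha⟩ := hD
      have h1 := gtVal_true_le ha
      rw [gtVal_of_empty (h a ha)] at h1
      omega
    | false =>
      obtain ⟨a, ha, hval⟩ := gtVal_false_exists hD
      rw [hval, gtVal_of_empty (h a ha)]
  · rw [gtVal_of_empty hD]; omega

end MoreGt

section NbrH
variable {G : SimpleGraph V} {v : V}

lemma nbrH_mem {a b : ↥{u : V | u ≠ v}} :
    b ∈ nbr (G.induce {u | u ≠ v}) a ↔ G.Adj ↑a ↑b := by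
  simp [nbr]

end NbrH
lemma main_aux (G : SimpleGraph V) (v : V) (hGv : NoIsolated (G.induce {u | u ≠ v})) :
    ∀ n : ℕ, ∀ D : Finset V, ∀ D' : Finset ↥{u : V | u ≠ v},
    ((univ : Finset V) \ D).card ≤ n →
    (∀ w : ↥{u : V | u ≠ v}, w ∈ D' → (w : V) ∈ D) →
    (∀ u : V, u ∈ D → ∀ h : u ≠ v, (⟨u, h⟩ : ↥{u : V | u ≠ v}) ∈ D') →
    ∀ t : Bool,
      gtVal G t D ≤ gtVal (G.induce {u | u ≠ v}) t D' + slack G v D := by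
  set H := G.induce {u : V | u ≠ v} with hHdef
  intro n
  induction n with
  | zero =>
    intro D D' hcard inv1 inv2 t
    have hD : ¬ (movesF G D).Nonempty := by
      refine movesF_empty_of_full fun u => ?_
      by_contra hu
      have hu' : u ∈ (univ : Finset V) \ D := by simp [hu]
      have := Finset.card_pos.mpr ⟨u, hu'⟩
      omega
    rw [gtVal_of_empty hD]
    exact Nat.zero_le _
  | succ n ih =>
    intro D D' hcard inv1 inv2 t
    by_cases hH : (movesF H D').Nonempty
    · cases t with
      | true =>
        obtain ⟨a, haH, hval⟩ := gtVal_true_exists hH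
        obtain ⟨x, hx, hxD'⟩ := Finset.not_subset.mp (mem_movesF.mp haH)
        have hxG : (x : V) ∈ nbr G ↑a := mem_nbr.mpr (nbrH_mem.mp hx)
        have hxD : (x : V) ∉ D := by
          intro hmem
          exact hxD' (inv2 ↑x hmem x.2)
        have haG : (↑a : V) ∈ movesF G D :=
          mem_movesF.mpr (Finset.not_subset.mpr ⟨↑x, hxG, hxD⟩)
        have hm : ((univ : Finset V) \ (D ∪ nbr G ↑a)).card ≤ n := by
          have := movesF_card G D haG; omega
        have inv1' : ∀ w : ↥{u : V | u ≠ v}, w ∈ D' ∪ nbr H a →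
            (w : V) ∈ D ∪ nbr G ↑a := by
          intro w hw
          rcases Finset.mem_union.mp hw with hw | hw
          · exact Finset.mem_union_left _ (inv1 w hw)
          · exact Finset.mem_union_right _ (mem_nbr.mpr (nbrH_mem.mp hw))
        have inv2' : ∀ u : V, u ∈ D ∪ nbr G ↑a → ∀ h : u ≠ v,
            (⟨u, h⟩ : ↥{u : V | u ≠ v}) ∈ D' ∪ nbr H a := by
          intro u hu h
          rcases Finset.mem_union.mp hu with hu | hu
          · exact Finset.mem_union_left _ (inv2 u hu h)
          · exact Finset.mem_union_right _ (nbrH_mem.mpr (mem_nbr.mp hu))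
        have hrec := ih (D ∪ nbr G ↑a) (D' ∪ nbr H a) hm inv1' inv2' false
        have hslack : slack G v (D ∪ nbr G ↑a) ≤ slack G v D :=
          slack_anti Finset.subset_union_left
        have h1 := gtVal_true_le haG
        have hval' : gtVal H true D' = 1 + gtVal H false (D' ∪ nbr H a) := hval
        rw [hval']
        omega
      | false =>
        by_cases hGm : (movesF G D).Nonempty
        · obtain ⟨s, hsG, hval⟩ := gtVal_false_exists hGm
          rw [hval]
          have hm : ((univ : Finset V) \ (D ∪ nbr G s)).card ≤ n := by
            have := movesF_card G D hsG; omega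
          by_cases hsv : s = v
          · subst hsv
            have hflag : ¬ nbr G s ⊆ D := mem_movesF.mp hsG
            set N' : Finset ↥{u : V | u ≠ s} :=
              univ.filter (fun w => (↑w : V) ∈ nbr G s) with hN'
            have inv1'' : ∀ w : ↥{u : V | u ≠ s}, w ∈ D' ∪ N' →
                (w : V) ∈ D ∪ nbr G s := by
              intro w hw
              rcases Finset.mem_union.mp hw with hw | hw
              · exact Finset.mem_union_left _ (inv1 w hw)
              · exact Finset.mem_union_right _ (by simpa [hN'] using hw)
            have inv2'' : ∀ u : V, u ∈ D ∪ nbr G s → ∀ h : u ≠ s,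
                (⟨u, h⟩ : ↥{u : V | u ≠ s}) ∈ D' ∪ N' := by
              intro u hu h
              rcases Finset.mem_union.mp hu with hu | hu
              · exact Finset.mem_union_left _ (inv2 u hu h)
              · exact Finset.mem_union_right _ (by simp [hN', hu])
            have hrec := ih (D ∪ nbr G s) (D' ∪ N') hm inv1'' inv2'' true
            have hsw : gtVal H true (D' ∪ N') ≤ gtVal H false D' + 1 := by
              have := gtVal_switch H (Finset.subset_union_left (s₁ := D') (s₂ := N')) true
              simpa using this
            have hs1 : slack G s (D ∪ nbr G s) + 2 ≤ slack G s D :=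
              slack_drop1 hflag Finset.subset_union_right Finset.subset_union_left
            omega
          · by_cases hil : nbr H ⟨s, hsv⟩ ⊆ D'
            · -- imagined illegal: s only dominates v
              obtain ⟨u, hu, huD⟩ := Finset.not_subset.mp (mem_movesF.mp hsG)
              have huv : u = v := by
                by_contra huv
                exact huD (inv1 ⟨u, huv⟩
                  (hil ((nbrH_mem (a := ⟨s, hsv⟩) (b := ⟨u, huv⟩)).mpr (mem_nbr.mp hu))))
              subst huv
              have inv1₂ : ∀ w : ↥{u' : V | u' ≠ u}, w ∈ D' →
                  (w : V) ∈ D ∪ nbr G s := fun w hw =>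
                Finset.mem_union_left _ (inv1 w hw)
              have inv2₂ : ∀ u' : V, u' ∈ D ∪ nbr G s → ∀ h : u' ≠ u,
                  (⟨u', h⟩ : ↥{u' : V | u' ≠ u}) ∈ D' := by
                intro u' hu' h
                rcases Finset.mem_union.mp hu' with hu' | hu'
                · exact inv2 u' hu' h
                · exact hil (nbrH_mem.mpr (mem_nbr.mp hu'))
              have hrec := ih (D ∪ nbr G s) D' hm inv1₂ inv2₂ true
              have hsw : gtVal H true D' ≤ gtVal H false D' + 1 := by
                have := gtVal_switch H (le_refl D') true
                simpa using this
              have hs2 : slack G u (D ∪ nbr G s) + 2 ≤ slack G u D :=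
                slack_drop2 huD (Finset.mem_union_right _ hu) Finset.subset_union_left
              omega
            · -- imagined legal
              have hsH : (⟨s, hsv⟩ : ↥{u : V | u ≠ v}) ∈ movesF H D' :=
                mem_movesF.mpr hil
              have hge : 1 + gtVal H true (D' ∪ nbr H ⟨s, hsv⟩) ≤ gtVal H false D' :=
                le_gtVal_false hsH
              have inv1₃ : ∀ w : ↥{u : V | u ≠ v},
                  w ∈ D' ∪ nbr H ⟨s, hsv⟩ → (w : V) ∈ D ∪ nbr G s := by
                intro w hw
                rcases Finset.mem_union.mp hw with hw | hw
                · exact Finset.mem_union_left _ (inv1 w hw)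
                · exact Finset.mem_union_right _ (mem_nbr.mpr (nbrH_mem.mp hw))
              have inv2₃ : ∀ u : V, u ∈ D ∪ nbr G s → ∀ h : u ≠ v,
                  (⟨u, h⟩ : ↥{u : V | u ≠ v}) ∈ D' ∪ nbr H ⟨s, hsv⟩ := by
                intro u hu h
                rcases Finset.mem_union.mp hu with hu | hu
                · exact Finset.mem_union_left _ (inv2 u hu h)
                · exact Finset.mem_union_right _ (nbrH_mem.mpr (mem_nbr.mp hu))
              have hrec := ih (D ∪ nbr G s) (D' ∪ nbr H ⟨s, hsv⟩) hm inv1₃ inv2₃ true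
              have hslack : slack G v (D ∪ nbr G s) ≤ slack G v D :=
                slack_anti Finset.subset_union_left
              omega
        · rw [gtVal_of_empty hGm]
          exact Nat.zero_le _
    · -- imagined game over: everything except possibly v is dominated
      have hD : ∀ u : V, u ≠ v → u ∈ D := by
        intro u hu
        obtain ⟨a, ha⟩ := hGv ⟨u, hu⟩
        have hmem : (⟨u, hu⟩ : ↥{u : V | u ≠ v}) ∈ nbr H a :=
          nbrH_mem.mpr ha.symm
        have haD' : nbr H a ⊆ D' := by
          by_contra hc
          exact hH ⟨a, mem_movesF.mpr hc⟩
        exact inv1 _ (haD' hmem)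
      by_cases hGm : (movesF G D).Nonempty
      · have hvD : v ∉ D := by
          obtain ⟨a, ha⟩ := hGm
          obtain ⟨u, hu, huD⟩ := Finset.not_subset.mp (mem_movesF.mp ha)
          intro hv
          rcases eq_or_ne u v with rfl | hne
          · exact huD hv
          · exact huD (hD u hne)
        have hone : gtVal G t D ≤ 1 := by
          refine gtVal_le_one (fun a ha => ?_) t
          refine movesF_empty_of_full fun u => ?_
          rcases eq_or_ne u v with rfl | hne
          · obtain ⟨w, hw, hwD⟩ := Finset.not_subset.mp (mem_movesF.mp ha)
            have hwv : w = u := by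
              by_contra hwv
              exact hwD (hD w hwv)
            exact Finset.mem_union_right _ (hwv ▸ hw)
          · exact Finset.mem_union_left _ (hD u hne)
        have h2 := slack_pos (G := G) hvD
        rw [gtVal_of_empty hH]
        omega
      · rw [gtVal_of_empty hGm]
        exact Nat.zero_le _

/-- For every graph `G` without isolated vertices and every vertex `v`
such that `G − v` has no isolated vertices, `γ_g^t(G) ≤ γ_g^t(G − v) + 4`. -/
theorem gtD_vertex_removal {V : Type*} [Fintype V] (G : SimpleGraph V) (v : V)
    (hG : NoIsolated G) (hGv : NoIsolated (G.induce {u | u ≠ v})) :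
    gtD G ≤ gtD (G.induce {u | u ≠ v}) + 4 := by
  have h := main_aux G v hGv (Fintype.card V) ∅ ∅
    (by simpa using Finset.card_le_univ _) (by simp) (by simp) true
  have h4 : slack G v ∅ ≤ 4 := slack_le_four
  unfold gtD
  omega
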